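/- arXiv:2408.09349 — 3 statements merged into one kernel-verified Lean document; each statement's English description precedes it below -/
import Mathlib

section
/- Let (S, Σ, 𝒫) be a probability space, λ ∈ (0,1), and ψ: S → ℝ a bounded measurable function with inf_S ψ > 0. Then ( ∫_S ψ^λ d𝒫 )^{1/λ} = inf { ( ∫_S ψ dQ ) · ( ∫_S (dQ/d𝒫)^{λ/(λ−1)} d𝒫 )^{(1−λ)/λ} : Q a probability measure on (S,Σ) with Q ≪ 𝒫 }, with the convention that the product is +∞ whenever ∫_S (dQ/d𝒫)^{λ/(λ−1)} d𝒫 = +∞. The infimum is attained at the measure dQ* ∝ ψ^{λ−1} d𝒫. -/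
/-!
Write `g = dQ/dP`. Hölder's inequality with exponents `1/l` and `1/(1 - l)`, applied to
`ψ^l = (g ψ)^l · g^(-l)`, gives the reverse Hölder inequality
`∫ ψ^l dP ≤ (∫ ψ dQ)^l · (∫ g^(l/(l-1)) dP)^(1-l)`, which is the lower bound after taking
`1/l`-th powers. Equality in Hölder's inequality holds when `g ψ` is proportional to
`g^(l/(l-1))`, that is for `g ∝ ψ^(l-1)`.
-/

open MeasureTheory ProbabilityTheory Real
open scoped ENNReal

namespace ENNReal

variable {α : Type*} [MeasurableSpace α] {μ : Measure α} {l : ℝ}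

theorem lintegral_rpow_le_lintegral_mul_rpow_mul {f g : α → ℝ≥0∞} (hf : AEMeasurable f μ)
    (hg : AEMeasurable g μ) (hg0 : ∀ᵐ x ∂μ, g x ≠ 0) (hg_top : ∀ᵐ x ∂μ, g x ≠ ∞)
    (hl0 : 0 < l) (hl1 : l < 1) :
    ∫⁻ x, f x ^ l ∂μ ≤ (∫⁻ x, g x * f x ∂μ) ^ l * (∫⁻ x, g x ^ (l / (l - 1)) ∂μ) ^ (1 - l) := by
  have hpq : (1 / l).HolderConjugate (1 / (1 - l)) :=
    Real.holderConjugate_iff.2 ⟨by rw [lt_div_iff₀ hl0]; linarith, by simp⟩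
  have h_holder := lintegral_mul_le_Lp_mul_Lq μ hpq (f := fun x => (g x * f x) ^ l)
    ((hg.mul hf).pow_const l) (hg.pow_const (-l))
  have hsplit : ∀ᵐ x ∂μ, ((fun x => (g x * f x) ^ l) * fun x => g x ^ (-l)) x = f x ^ l := by
    filter_upwards [hg0, hg_top] with x h0 htop
    simp only [Pi.mul_apply]
    rw [mul_rpow_of_nonneg _ _ hl0.le, mul_right_comm, ← rpow_add l (-l) h0 htop, add_neg_cancel,
      rpow_zero, one_mul]
  have h_first (x : α) : ((g x * f x) ^ l) ^ (1 / l) = g x * f x := by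
    rw [← rpow_mul, mul_one_div_cancel hl0.ne', rpow_one]
  have h_second (x : α) : (g x ^ (-l)) ^ (1 / (1 - l)) = g x ^ (l / (l - 1)) := by
    rw [← rpow_mul]
    congr 1
    have : l - 1 ≠ 0 := by linarith
    have : 1 - l ≠ 0 := by linarith
    field_simp
    ring
  simpa only [lintegral_congr_ae hsplit, h_first, h_second, one_div_one_div] using h_holder

theorem lintegral_rpow_rpow_le_lintegral_mul_mul {f g : α → ℝ≥0∞} (hf : AEMeasurable f μ)
    (hg : AEMeasurable g μ) (hg_top : ∀ᵐ x ∂μ, g x ≠ ∞) (hfg : ∫⁻ x, g x * f x ∂μ ≠ 0)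
    (hl0 : 0 < l) (hl1 : l < 1) :
    (∫⁻ x, f x ^ l ∂μ) ^ (1 / l) ≤
      (∫⁻ x, g x * f x ∂μ) * (∫⁻ x, g x ^ (l / (l - 1)) ∂μ) ^ ((1 - l) / l) := by
  have hs : l / (l - 1) < 0 := div_neg_of_pos_of_neg hl0 (by linarith)
  by_cases hB : ∫⁻ x, g x ^ (l / (l - 1)) ∂μ = ∞
  · rw [hB, top_rpow_of_pos (div_pos (by linarith) hl0), mul_top hfg]
    exact le_top
  -- a negative power of `g` has finite integral only if `g` vanishes on a null set
  have hg0 : ∀ᵐ x ∂μ, g x ≠ 0 := by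
    filter_upwards [ae_lt_top' (hg.pow_const _) hB] with x hx h0
    simp [h0, zero_rpow_of_neg hs] at hx
  calc (∫⁻ x, f x ^ l ∂μ) ^ (1 / l)
      ≤ ((∫⁻ x, g x * f x ∂μ) ^ l * (∫⁻ x, g x ^ (l / (l - 1)) ∂μ) ^ (1 - l)) ^ (1 / l) :=
        rpow_le_rpow (lintegral_rpow_le_lintegral_mul_rpow_mul hf hg hg0 hg_top hl0 hl1)
          (by positivity)
    _ = _ := by
        rw [mul_rpow_of_nonneg _ _ (by positivity), ← rpow_mul, ← rpow_mul,
          mul_one_div_cancel hl0.ne', rpow_one, mul_one_div]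

theorem lintegral_rpow_div_mul_mul_lintegral_rpow_eq {f : α → ℝ≥0∞} (hf0 : ∀ᵐ x ∂μ, f x ≠ 0)
    (hf_top : ∀ᵐ x ∂μ, f x ≠ ∞) {c : ℝ≥0∞} (hc0 : c ≠ 0) (hc_top : c ≠ ∞)
    (hl0 : 0 < l) (hl1 : l < 1) :
    (∫⁻ x, f x ^ (l - 1) / c * f x ∂μ) *
        (∫⁻ x, (f x ^ (l - 1) / c) ^ (l / (l - 1)) ∂μ) ^ ((1 - l) / l) =
      (∫⁻ x, f x ^ l ∂μ) ^ (1 / l) := by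
  have hl : l - 1 ≠ 0 := by linarith
  have h_mean : ∫⁻ x, f x ^ (l - 1) / c * f x ∂μ = (∫⁻ x, f x ^ l ∂μ) * c⁻¹ := by
    rw [← lintegral_mul_const' _ _ (inv_ne_top.2 hc0)]
    refine lintegral_congr_ae ?_
    filter_upwards [hf0, hf_top] with x h0 htop
    have h_add := rpow_add (l - 1) 1 h0 htop
    rw [sub_add_cancel, rpow_one] at h_add
    rw [div_eq_mul_inv, mul_right_comm, ← h_add]
  have h_power : ∫⁻ x, (f x ^ (l - 1) / c) ^ (l / (l - 1)) ∂μ =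
      (∫⁻ x, f x ^ l ∂μ) * (c ^ (l / (l - 1)))⁻¹ := by
    rw [← lintegral_mul_const' _ _ (inv_ne_top.2 (rpow_pos hc0.bot_lt hc_top).ne')]
    refine lintegral_congr_ae ?_
    filter_upwards [hf0, hf_top] with x h0 htop
    have hpow0 : f x ^ (l - 1) ≠ 0 := (rpow_pos h0.bot_lt htop).ne'
    rw [div_eq_mul_inv, mul_rpow_of_ne_zero hpow0 (ENNReal.inv_ne_zero.2 hc_top), ← rpow_mul,
      mul_div_cancel₀ _ hl, inv_rpow]
  have hexp : l / (l - 1) * ((1 - l) / l) = -1 := by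
    field_simp
    ring
  rw [h_mean, h_power, mul_rpow_of_nonneg _ _ (div_pos (by linarith) hl0).le, ← inv_rpow,
    ← rpow_mul, hexp, rpow_neg_one, inv_inv, mul_mul_mul_comm, ENNReal.inv_mul_cancel hc0 hc_top,
    mul_one]
  have h_one_div : 1 / l = 1 + (1 - l) / l := by
    field_simp
    ring
  rw [h_one_div, rpow_add_of_nonneg _ _ zero_le_one (div_pos (by linarith) hl0).le, rpow_one]

end ENNReal

section

variable {α : Type*} [MeasurableSpace α] {μ : Measure α}

theorem integrable_rpow_of_mem_Icc [IsFiniteMeasure μ] {ψ : α → ℝ} (hψ : Measurable ψ) {c M : ℝ}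
    (hc : 0 < c) (hψcM : ∀ x, ψ x ∈ Set.Icc c M) (r : ℝ) :
    Integrable (fun x => ψ x ^ r) μ := by
  refine .of_bound (hψ.pow_const r).aestronglyMeasurable (max (c ^ r) (M ^ r))
    (ae_of_all _ fun x => ?_)
  obtain ⟨hcx, hxM⟩ := hψcM x
  rw [norm_of_nonneg (rpow_nonneg (hc.le.trans hcx) r)]
  rcases le_total 0 r with hr | hr
  · exact le_max_of_le_right (rpow_le_rpow (hc.le.trans hcx) hxM hr)
  · exact le_max_of_le_left (rpow_le_rpow_of_nonpos hc hcx hr)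

theorem ofReal_integral_rpow {ψ : α → ℝ} (hψ : ∀ x, 0 < ψ x) {r : ℝ}
    (hint : Integrable (fun x => ψ x ^ r) μ) :
    ENNReal.ofReal (∫ x, ψ x ^ r ∂μ) = ∫⁻ x, ENNReal.ofReal (ψ x) ^ r ∂μ := by
  rw [ofReal_integral_eq_lintegral_ofReal hint
    (ae_of_all _ fun x => (rpow_pos_of_pos (hψ x) r).le)]
  exact lintegral_congr fun x => (ENNReal.ofReal_rpow_of_pos (hψ x)).symm

theorem integral_pos_of_forall_pos [NeZero μ] {h : α → ℝ} (hint : Integrable h μ)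
    (hpos : ∀ x, 0 < h x) : 0 < ∫ x, h x ∂μ := by
  refine (integral_pos_iff_support_of_nonneg (fun x => (hpos x).le) hint).2 ?_
  rw [Function.support_eq_univ fun x => (hpos x).ne']
  exact Measure.measure_univ_pos.2 (NeZero.ne μ)

theorem isProbabilityMeasure_withDensity_ofReal_div_integral {h : α → ℝ} (hint : Integrable h μ)
    (h0 : ∀ᵐ x ∂μ, 0 ≤ h x) (hne : ∫ x, h x ∂μ ≠ 0) :
    IsProbabilityMeasure (μ.withDensity fun x => ENNReal.ofReal (h x / ∫ x', h x' ∂μ)) := by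
  constructor
  rw [withDensity_apply _ MeasurableSet.univ, setLIntegral_univ,
    ← ofReal_integral_eq_lintegral_ofReal (hint.div_const _)
      (h0.mono fun x hx => div_nonneg hx (integral_nonneg_of_ae h0)),
    integral_div, div_self hne, ENNReal.ofReal_one]

theorem ofReal_integral_eq_lintegral_rnDeriv_mul {ν : Measure α} [μ.HaveLebesgueDecomposition ν]
    (hμν : μ ≪ ν) {ψ : α → ℝ} (hψ : Measurable ψ) (hψ0 : ∀ x, 0 ≤ ψ x) (hint : Integrable ψ μ) :
    ENNReal.ofReal (∫ x, ψ x ∂μ) = ∫⁻ x, μ.rnDeriv ν x * ENNReal.ofReal (ψ x) ∂ν := by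
  rw [ofReal_integral_eq_lintegral_ofReal hint (ae_of_all _ hψ0),
    lintegral_rnDeriv_mul hμν hψ.ennreal_ofReal.aemeasurable]

end

section PowerAmbiguity

variable {S : Type*} [MeasurableSpace S] (P : Measure S) {l : ℝ} {ψ : S → ℝ}

/-- `R(Q, ∫ ψ dQ)` in the dual representation of the power ambiguity function `x ↦ x ^ l`. -/
noncomputable def powerDualObjective (l : ℝ) (ψ : S → ℝ) (Q : Measure S) : ℝ≥0∞ :=
  ENNReal.ofReal (∫ θ, ψ θ ∂Q) * (∫⁻ θ, Q.rnDeriv P θ ^ (l / (l - 1)) ∂P) ^ ((1 - l) / l)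

noncomputable def powerOptimalMeasure (l : ℝ) (ψ : S → ℝ) : Measure S :=
  P.withDensity fun θ => ENNReal.ofReal (ψ θ ^ (l - 1) / ∫ θ', ψ θ' ^ (l - 1) ∂P)

theorem rpow_lintegral_le_powerDualObjective [SigmaFinite P] (hl0 : 0 < l) (hl1 : l < 1)
    (hψ : Measurable ψ) (hψ_pos : ∀ θ, 0 < ψ θ) {Q : Measure S} [IsProbabilityMeasure Q]
    (hQP : Q ≪ P) (hψQ : Integrable ψ Q) :
    (∫⁻ θ, ENNReal.ofReal (ψ θ) ^ l ∂P) ^ (1 / l) ≤ powerDualObjective P l ψ Q := by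
  have hobj := ofReal_integral_eq_lintegral_rnDeriv_mul hQP hψ (fun θ => (hψ_pos θ).le) hψQ
  rw [powerDualObjective, hobj]
  refine ENNReal.lintegral_rpow_rpow_le_lintegral_mul_mul hψ.ennreal_ofReal.aemeasurable
    (Measure.measurable_rnDeriv Q P).aemeasurable (Measure.rnDeriv_ne_top Q P) ?_ hl0 hl1
  rw [← hobj]
  exact (ENNReal.ofReal_pos.2 (integral_pos_of_forall_pos hψQ hψ_pos)).ne'

variable [IsProbabilityMeasure P] {c M : ℝ}

theorem isProbabilityMeasure_powerOptimalMeasure (hψ : Measurable ψ) (hc : 0 < c)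
    (hψcM : ∀ θ, ψ θ ∈ Set.Icc c M) : IsProbabilityMeasure (powerOptimalMeasure P l ψ) :=
  isProbabilityMeasure_withDensity_ofReal_div_integral (integrable_rpow_of_mem_Icc hψ hc hψcM _)
    (ae_of_all _ fun θ => (rpow_pos_of_pos (hc.trans_le (hψcM θ).1) _).le)
    (integral_pos_of_forall_pos (integrable_rpow_of_mem_Icc hψ hc hψcM _)
      fun θ => rpow_pos_of_pos (hc.trans_le (hψcM θ).1) _).ne'

theorem powerDualObjective_powerOptimalMeasure (hl0 : 0 < l) (hl1 : l < 1) (hψ : Measurable ψ)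
    (hc : 0 < c) (hψcM : ∀ θ, ψ θ ∈ Set.Icc c M) :
    powerDualObjective P l ψ (powerOptimalMeasure P l ψ) =
      (∫⁻ θ, ENNReal.ofReal (ψ θ) ^ l ∂P) ^ (1 / l) := by
  have hψ_pos (θ : S) : 0 < ψ θ := hc.trans_le (hψcM θ).1
  have hD : 0 < ∫ θ, ψ θ ^ (l - 1) ∂P :=
    integral_pos_of_forall_pos (integrable_rpow_of_mem_Icc hψ hc hψcM _)
      fun θ => rpow_pos_of_pos (hψ_pos θ) _
  have := isProbabilityMeasure_powerOptimalMeasure P (l := l) hψ hc hψcM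
  have hQ₀P : powerOptimalMeasure P l ψ ≪ P := withDensity_absolutelyContinuous _ _
  set g : S → ℝ≥0∞ := fun θ =>
    ENNReal.ofReal (ψ θ) ^ (l - 1) / ENNReal.ofReal (∫ θ', ψ θ' ^ (l - 1) ∂P)
  have hrn : (powerOptimalMeasure P l ψ).rnDeriv P =ᵐ[P] g := by
    refine (Measure.rnDeriv_withDensity P
      ((hψ.pow_const (l - 1)).div_const _).ennreal_ofReal).trans (ae_of_all _ fun θ => ?_)
    dsimp only
    rw [ENNReal.ofReal_div_of_pos hD, ← ENNReal.ofReal_rpow_of_pos (hψ_pos θ)]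
  have hmean : ENNReal.ofReal (∫ θ, ψ θ ∂powerOptimalMeasure P l ψ) =
      ∫⁻ θ, g θ * ENNReal.ofReal (ψ θ) ∂P := by
    rw [ofReal_integral_eq_lintegral_rnDeriv_mul hQ₀P hψ (fun θ => (hψ_pos θ).le)
      (.of_bound hψ.aestronglyMeasurable M (ae_of_all _ fun θ => ?_))]
    · exact lintegral_congr_ae (hrn.mul (.refl _ _))
    · rw [norm_of_nonneg (hψ_pos θ).le]
      exact (hψcM θ).2
  have hpow : ∫⁻ θ, (powerOptimalMeasure P l ψ).rnDeriv P θ ^ (l / (l - 1)) ∂P =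
      ∫⁻ θ, g θ ^ (l / (l - 1)) ∂P :=
    lintegral_congr_ae (hrn.fun_comp (· ^ (l / (l - 1))))
  rw [powerDualObjective, hmean, hpow]
  exact ENNReal.lintegral_rpow_div_mul_mul_lintegral_rpow_eq
    (ae_of_all _ fun θ => (ENNReal.ofReal_pos.2 (hψ_pos θ)).ne')
    (ae_of_all _ fun _ => ENNReal.ofReal_ne_top) (ENNReal.ofReal_pos.2 hD).ne'
    ENNReal.ofReal_ne_top hl0 hl1

end PowerAmbiguity

/-- dual representation of the power ambiguity function, `λ ∈ (0,1)`.
For a probability measure `P`, `λ ∈ (0,1)` and a bounded measurable `ψ` with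
`inf ψ > 0`,
`(∫ ψ^λ dP)^{1/λ} = inf { (∫ ψ dQ)·(∫ (dQ/dP)^{λ/(λ−1)} dP)^{(1−λ)/λ} : Q prob., Q ≪ P }`,
with the convention (built into `ℝ≥0∞` arithmetic) that the product is `+∞` whenever
`∫ (dQ/dP)^{λ/(λ−1)} dP = +∞`.  The infimum is attained at `dQ* ∝ ψ^{λ−1} dP`. -/
theorem stmt_8
    {S : Type*} [MeasurableSpace S] (P : Measure S) [IsProbabilityMeasure P]
    (l : ℝ) (hl0 : 0 < l) (hl1 : l < 1)
    (ψ : S → ℝ) (hψmeas : Measurable ψ) (hψbdd : ∃ M, ∀ θ, |ψ θ| ≤ M)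
    (c : ℝ) (hc : 0 < c) (hcψ : ∀ θ, c ≤ ψ θ) :
    (ENNReal.ofReal ((∫ θ, ψ θ ^ l ∂P) ^ (1 / l))
        = ⨅ Q : {Q : Measure S // IsProbabilityMeasure Q ∧ Q ≪ P},
            (ENNReal.ofReal (∫ θ, ψ θ ∂(Q : Measure S)) *
              (∫⁻ θ, ((Q : Measure S).rnDeriv P θ) ^ (l / (l - 1)) ∂P) ^ ((1 - l) / l))) ∧
      IsProbabilityMeasure
        (P.withDensity fun θ =>
          ENNReal.ofReal (ψ θ ^ (l - 1) / ∫ θ', ψ θ' ^ (l - 1) ∂P)) ∧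
      (P.withDensity fun θ =>
          ENNReal.ofReal (ψ θ ^ (l - 1) / ∫ θ', ψ θ' ^ (l - 1) ∂P)) ≪ P ∧
      ENNReal.ofReal
            (∫ θ, ψ θ ∂(P.withDensity fun θ =>
              ENNReal.ofReal (ψ θ ^ (l - 1) / ∫ θ', ψ θ' ^ (l - 1) ∂P))) *
          (∫⁻ θ, ((P.withDensity fun θ =>
              ENNReal.ofReal (ψ θ ^ (l - 1) / ∫ θ', ψ θ' ^ (l - 1) ∂P)).rnDeriv P θ)
                ^ (l / (l - 1)) ∂P) ^ ((1 - l) / l)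
        = ENNReal.ofReal ((∫ θ, ψ θ ^ l ∂P) ^ (1 / l)) := by
  obtain ⟨M, hM⟩ := hψbdd
  have hψcM (θ : S) : ψ θ ∈ Set.Icc c M := ⟨hcψ θ, (abs_le.1 (hM θ)).2⟩
  have hψ_pos (θ : S) : 0 < ψ θ := hc.trans_le (hcψ θ)
  have hlhs : ENNReal.ofReal ((∫ θ, ψ θ ^ l ∂P) ^ (1 / l)) =
      (∫⁻ θ, ENNReal.ofReal (ψ θ) ^ l ∂P) ^ (1 / l) := by
    rw [← ofReal_integral_rpow hψ_pos (integrable_rpow_of_mem_Icc hψmeas hc hψcM l),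
      ENNReal.ofReal_rpow_of_nonneg
        (integral_nonneg fun θ => (rpow_pos_of_pos (hψ_pos θ) l).le) (by positivity)]
  have hQ₀ := isProbabilityMeasure_powerOptimalMeasure P (l := l) hψmeas hc hψcM
  have hQ₀P : powerOptimalMeasure P l ψ ≪ P := withDensity_absolutelyContinuous _ _
  have hattain := powerDualObjective_powerOptimalMeasure P hl0 hl1 hψmeas hc hψcM
  rw [← hlhs] at hattain
  refine ⟨le_antisymm (le_iInf fun ⟨Q, hQ, hQP⟩ => ?_) (iInf_le_of_le ⟨_, hQ₀, hQ₀P⟩ hattain.le),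
    hQ₀, hQ₀P, hattain⟩
  rw [hlhs]
  exact rpow_lintegral_le_powerDualObjective P hl0 hl1 hψmeas hψ_pos hQP
    (.of_bound hψmeas.aestronglyMeasurable M (ae_of_all _ fun θ => hM θ))
end

section
/- Let (S, Σ, 𝒫) be a probability space and ψ: S → ℝ a bounded measurable function with inf_S ψ > 0. Then exp( ∫_S log ψ d𝒫 ) = inf { ( ∫_S ψ dQ ) · exp( −∫_S log(dQ/d𝒫) d𝒫 ) : Q a probability measure on (S,Σ) with Q ≪ 𝒫 }. The infimum is attained at the measure dQ* = ψ^{−1} d𝒫 / ∫_S ψ^{−1} d𝒫. -/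
/-!
Write `f = dQ/dP`. If `∫ (log f)⁻ dP = ∞` the penalty is `+∞` and there is nothing to show.
Otherwise `log f` is integrable, since `(log f)⁺ ≤ f` and `∫ f dP = 1`, and Jensen's inequality for
the concave logarithm applied to `f ψ` under `P` gives
`∫ log ψ dP + ∫ log f dP = ∫ log (f ψ) dP ≤ log ∫ f ψ dP = log ∫ ψ dQ`, which is the lower bound.
For `dQ* = ψ⁻¹ dP / ∫ ψ⁻¹ dP` the product `f ψ` is constant, so Jensen's inequality is an equality.
-/

open MeasureTheory ProbabilityTheory Real

/-- The nonnegative part of an extended real, valued in `ℝ≥0∞`. -/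
noncomputable def erealPos (x : EReal) : ENNReal :=
  open scoped Classical in
  if x = ⊤ then ⊤ else ENNReal.ofReal x.toReal

/-- The integral of an `EReal`-valued function, defined as the difference of the lower
integrals of its positive and negative parts. -/
noncomputable def erealIntegral {α : Type*} [MeasurableSpace α] (μ : Measure α)
    (g : α → EReal) : EReal :=
  ((∫⁻ a, erealPos (g a) ∂μ : ENNReal) : EReal) - ((∫⁻ a, erealPos (-g a) ∂μ : ENNReal) : EReal)

open scoped ENNReal

lemma erealPos_eq_toENNReal : erealPos = EReal.toENNReal := by
  funext x
  by_cases hx : x = ⊤ <;> simp [erealPos, hx]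

section erealIntegral

variable {α : Type*} [MeasurableSpace α] {μ : Measure α}

lemma ENNReal.ofReal_add_ofReal_neg (r : ℝ) : ENNReal.ofReal r + ENNReal.ofReal (-r) = ‖r‖ₑ := by
  rw [enorm_eq_ofReal_abs]
  rcases le_total 0 r with h | h
  · simp [abs_of_nonneg h, ENNReal.ofReal_of_nonpos (neg_nonpos.2 h)]
  · simp [abs_of_nonpos h, ENNReal.ofReal_of_nonpos h]

lemma integrable_iff_lintegral_ofReal_ne_top {h : α → ℝ} (hm : AEStronglyMeasurable h μ) :
    Integrable h μ ↔
      ∫⁻ a, ENNReal.ofReal (h a) ∂μ ≠ ∞ ∧ ∫⁻ a, ENNReal.ofReal (-h a) ∂μ ≠ ∞ := by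
  simp only [Integrable, HasFiniteIntegral, hm, true_and, ← ENNReal.ofReal_add_ofReal_neg,
    lintegral_add_left' hm.aemeasurable.ennreal_ofReal, lt_top_iff_ne_top, ENNReal.add_ne_top]

lemma lintegral_toENNReal_congr_coe {g : α → EReal} {h : α → ℝ}
    (hg : g =ᵐ[μ] fun a => (h a : EReal)) :
    ∫⁻ a, (g a).toENNReal ∂μ = ∫⁻ a, ENNReal.ofReal (h a) ∂μ :=
  lintegral_congr_ae (hg.mono fun a ha => by simp only [ha, EReal.real_coe_toENNReal])

lemma lintegral_toENNReal_neg_congr_coe {g : α → EReal} {h : α → ℝ}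
    (hg : g =ᵐ[μ] fun a => (h a : EReal)) :
    ∫⁻ a, (-g a).toENNReal ∂μ = ∫⁻ a, ENNReal.ofReal (-h a) ∂μ :=
  lintegral_toENNReal_congr_coe (hg.mono fun a ha => by simp only [ha, EReal.coe_neg])

lemma erealIntegral_eq_integral {g : α → EReal} {h : α → ℝ}
    (hg : g =ᵐ[μ] fun a => (h a : EReal)) (hint : Integrable h μ) :
    erealIntegral μ g = ∫ a, h a ∂μ := by
  obtain ⟨hpos, hneg⟩ := (integrable_iff_lintegral_ofReal_ne_top hint.1).1 hint
  rw [erealIntegral, erealPos_eq_toENNReal, lintegral_toENNReal_congr_coe hg,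
    lintegral_toENNReal_neg_congr_coe hg,
    integral_eq_lintegral_pos_part_sub_lintegral_neg_part hint,
    EReal.coe_sub, EReal.coe_ennreal_toReal hpos, EReal.coe_ennreal_toReal hneg]

end erealIntegral

section logDensity

variable {α : Type*} [MeasurableSpace α] {μ : Measure α} {f : α → ℝ≥0∞}

lemma toENNReal_log_le (x : ℝ≥0∞) : (ENNReal.log x).toENNReal ≤ x := by
  rcases eq_or_ne x ⊤ with rfl | hx
  · simp
  rcases eq_or_ne x 0 with rfl | hx0
  · simp
  rw [ENNReal.log_pos_real hx0 hx, EReal.real_coe_toENNReal]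
  exact ENNReal.ofReal_le_of_le_toReal (Real.log_le_self ENNReal.toReal_nonneg)

lemma ae_ne_zero_of_lintegral_toENNReal_neg_log_ne_top (hf : Measurable f)
    (h : ∫⁻ a, (-ENNReal.log (f a)).toENNReal ∂μ ≠ ∞) : ∀ᵐ a ∂μ, f a ≠ 0 := by
  filter_upwards [ae_lt_top hf.ennreal_log.neg.ereal_toENNReal h] with a ha h0
  simp [h0] at ha

lemma log_ae_eq_coe_log_toReal (h0 : ∀ᵐ a ∂μ, f a ≠ 0) (htop : ∀ᵐ a ∂μ, f a ≠ ∞) :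
    (fun a => ENNReal.log (f a)) =ᵐ[μ] fun a => (Real.log (f a).toReal : EReal) := by
  filter_upwards [h0, htop] with a ha0 hatop
  exact ENNReal.log_pos_real ha0 hatop

end logDensity

section lowerBound

variable {α : Type*} [MeasurableSpace α]

lemma integral_pos_of_ae_pos {μ : Measure α} [NeZero μ] {h : α → ℝ} (hpos : ∀ᵐ a ∂μ, 0 < h a)
    (hint : Integrable h μ) : 0 < ∫ a, h a ∂μ := by
  rw [integral_pos_iff_support_of_nonneg_ae (hpos.mono fun a ha => ha.le) hint, pos_iff_ne_zero]
  intro h0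
  obtain ⟨a, ha0, ha⟩ := ((measure_eq_zero_iff_ae_notMem.1 h0).and hpos).exists
  exact ha0 ha.ne'

theorem integral_log_le_log_integral {μ : Measure α} [IsProbabilityMeasure μ] {h : α → ℝ}
    (hpos : ∀ᵐ a ∂μ, 0 < h a) (hint : Integrable h μ)
    (hlog : Integrable (fun a => log (h a)) μ) : ∫ a, log (h a) ∂μ ≤ log (∫ a, h a ∂μ) := by
  set m := ∫ a, h a ∂μ
  have hm : 0 < m := integral_pos_of_ae_pos hpos hint
  have htangent : ∀ᵐ a ∂μ, log (h a) ≤ log m + h a / m - 1 := by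
    filter_upwards [hpos] with a ha
    have := log_le_sub_one_of_pos (div_pos ha hm)
    rw [log_div ha.ne' hm.ne'] at this
    linarith
  have hint_add : Integrable (fun a => log m + h a / m) μ :=
    (integrable_const _).add (hint.div_const m)
  calc ∫ a, log (h a) ∂μ ≤ ∫ a, (log m + h a / m - 1) ∂μ :=
        integral_mono_ae hlog (hint_add.sub (integrable_const _)) htangent
    _ = log m := by
      rw [integral_sub hint_add (integrable_const _),
        integral_add (integrable_const _) (hint.div_const m), integral_div]
      simp [m, hm.ne']

variable {P Q : Measure α} {ψ : α → ℝ}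

lemma integral_log_add_integral_log_rnDeriv_le [IsProbabilityMeasure P] [IsFiniteMeasure Q]
    (hQP : Q ≪ P) (hψ : ∀ a, 0 < ψ a) (hψQ : Integrable ψ Q)
    (hlogψ : Integrable (fun a => log (ψ a)) P) (hf0 : ∀ᵐ a ∂P, Q.rnDeriv P a ≠ 0)
    (hlogf : Integrable (fun a => log (Q.rnDeriv P a).toReal) P) :
    ∫ a, log (ψ a) ∂P + ∫ a, log (Q.rnDeriv P a).toReal ∂P ≤ log (∫ a, ψ a ∂Q) := by
  have hf_pos : ∀ᵐ a ∂P, 0 < (Q.rnDeriv P a).toReal := by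
    filter_upwards [hf0, Q.rnDeriv_lt_top P] with a h0 htop
    exact ENNReal.toReal_pos h0 htop.ne
  have hlog_mul : (fun a => log (ψ a) + log (Q.rnDeriv P a).toReal)
      =ᵐ[P] fun a => log ((Q.rnDeriv P a).toReal • ψ a) := by
    filter_upwards [hf_pos] with a ha
    rw [smul_eq_mul, log_mul ha.ne' (hψ a).ne', add_comm]
  rw [← integral_add hlogψ hlogf, integral_congr_ae hlog_mul, ← integral_rnDeriv_smul hQP]
  exact integral_log_le_log_integral (hf_pos.mono fun a ha => mul_pos ha (hψ a))
    ((integrable_rnDeriv_smul_iff hQP).2 hψQ) ((hlogψ.add hlogf).congr hlog_mul)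

theorem ofReal_exp_integral_log_le [IsProbabilityMeasure P] [IsProbabilityMeasure Q]
    (hQP : Q ≪ P) (hψ : ∀ a, 0 < ψ a) (hψQ : Integrable ψ Q)
    (hlogψ : Integrable (fun a => log (ψ a)) P) :
    ENNReal.ofReal (exp (∫ a, log (ψ a) ∂P)) ≤ ENNReal.ofReal (∫ a, ψ a ∂Q) *
      EReal.exp (-(erealIntegral P fun a => ENNReal.log (Q.rnDeriv P a))) := by
  have hm : 0 < ∫ a, ψ a ∂Q := integral_pos_of_ae_pos (ae_of_all _ hψ) hψQ
  by_cases hneg : ∫⁻ a, (-ENNReal.log (Q.rnDeriv P a)).toENNReal ∂P = ∞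
  · have hbot : erealIntegral P (fun a => ENNReal.log (Q.rnDeriv P a)) = ⊥ := by
      rw [erealIntegral, erealPos_eq_toENNReal, hneg]
      simp
    rw [hbot, EReal.neg_bot, EReal.exp_top, ENNReal.mul_top (ENNReal.ofReal_pos.2 hm).ne']
    exact le_top
  have hf0 := ae_ne_zero_of_lintegral_toENNReal_neg_log_ne_top (Q.measurable_rnDeriv P) hneg
  have hlog := log_ae_eq_coe_log_toReal hf0 (Q.rnDeriv_ne_top P)
  have hlogf : Integrable (fun a => log (Q.rnDeriv P a).toReal) P := by
    refine (integrable_iff_lintegral_ofReal_ne_top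
      (Q.measurable_rnDeriv P).ennreal_toReal.log.aestronglyMeasurable).2 ⟨?_, ?_⟩
    · rw [← lintegral_toENNReal_congr_coe hlog]
      exact ((lintegral_mono fun a => toENNReal_log_le _).trans
        Measure.lintegral_rnDeriv_le).trans_lt (measure_lt_top _ _) |>.ne
    · rwa [← lintegral_toENNReal_neg_congr_coe hlog]
  rw [erealIntegral_eq_integral hlog hlogf, ← EReal.coe_neg, EReal.exp_coe,
    ← ENNReal.ofReal_mul hm.le]
  refine ENNReal.ofReal_le_ofReal ?_
  set I := ∫ a, log (Q.rnDeriv P a).toReal ∂P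
  calc exp (∫ a, log (ψ a) ∂P) = exp (∫ a, log (ψ a) ∂P + I) * exp (-I) := by
        rw [← exp_add, add_neg_cancel_right]
    _ ≤ exp (log (∫ a, ψ a ∂Q)) * exp (-I) := by
        gcongr
        exact integral_log_add_integral_log_rnDeriv_le hQP hψ hψQ hlogψ hf0 hlogf
    _ = (∫ a, ψ a ∂Q) * exp (-I) := by rw [exp_log hm]

end lowerBound

section minimizer

variable {α : Type*} [MeasurableSpace α] {P : Measure α} {ψ : α → ℝ}

lemma isProbabilityMeasure_withDensity_ofReal {d : α → ℝ} (hd : 0 ≤ᵐ[P] d)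
    (hint : Integrable d P) (h1 : ∫ a, d a ∂P = 1) :
    IsProbabilityMeasure (P.withDensity fun a => ENNReal.ofReal (d a)) := by
  constructor
  rw [withDensity_apply _ MeasurableSet.univ, Measure.restrict_univ,
    ← ofReal_integral_eq_lintegral_ofReal hint hd, h1, ENNReal.ofReal_one]

lemma erealIntegral_log_rnDeriv_withDensity_ofReal [SigmaFinite P] {d : α → ℝ}
    (hdm : Measurable d) (hd : ∀ a, 0 < d a) (hlog : Integrable (fun a => log (d a)) P) :
    erealIntegral P (fun a => ENNReal.log
      ((P.withDensity fun a => ENNReal.ofReal (d a)).rnDeriv P a)) = ∫ a, log (d a) ∂P := by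
  refine erealIntegral_eq_integral ?_ hlog
  filter_upwards [Measure.rnDeriv_withDensity P hdm.ennreal_ofReal] with a ha
  rw [ha, ENNReal.log_ofReal_of_pos (hd a)]

noncomputable def inverseTilt (P : Measure α) (ψ : α → ℝ) : Measure α :=
  P.withDensity fun a => ENNReal.ofReal ((ψ a)⁻¹ / ∫ b, (ψ b)⁻¹ ∂P)

lemma isProbabilityMeasure_inverseTilt [IsProbabilityMeasure P] (hψ : ∀ a, 0 < ψ a)
    (hinv : Integrable (fun a => (ψ a)⁻¹) P) : IsProbabilityMeasure (inverseTilt P ψ) := by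
  have hZ : 0 < ∫ a, (ψ a)⁻¹ ∂P :=
    integral_pos_of_ae_pos (ae_of_all _ fun a => inv_pos.2 (hψ a)) hinv
  refine isProbabilityMeasure_withDensity_ofReal
    (ae_of_all _ fun a => div_nonneg (inv_pos.2 (hψ a)).le hZ.le) (hinv.div_const _) ?_
  rw [integral_div, div_self hZ.ne']

lemma integral_inverseTilt [IsProbabilityMeasure P] (hψ : ∀ a, 0 < ψ a) (hψm : Measurable ψ) :
    ∫ a, ψ a ∂(inverseTilt P ψ) = (∫ a, (ψ a)⁻¹ ∂P)⁻¹ := by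
  have hZ : 0 ≤ ∫ a, (ψ a)⁻¹ ∂P := integral_nonneg fun a => (inv_pos.2 (hψ a)).le
  have hconst : ∀ a, (ENNReal.ofReal ((ψ a)⁻¹ / ∫ b, (ψ b)⁻¹ ∂P)).toReal • ψ a
      = (∫ b, (ψ b)⁻¹ ∂P)⁻¹ := fun a => by
    rw [ENNReal.toReal_ofReal (div_nonneg (inv_pos.2 (hψ a)).le hZ), smul_eq_mul,
      div_mul_eq_mul_div, inv_mul_cancel₀ (hψ a).ne', one_div]
  rw [inverseTilt, integral_withDensity_eq_integral_toReal_smul (by fun_prop)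
    (ae_of_all _ fun a => ENNReal.ofReal_lt_top), funext hconst]
  simp

lemma ofReal_integral_mul_exp_inverseTilt [IsProbabilityMeasure P] (hψ : ∀ a, 0 < ψ a)
    (hψm : Measurable ψ) (hinv : Integrable (fun a => (ψ a)⁻¹) P)
    (hlogψ : Integrable (fun a => log (ψ a)) P) :
    ENNReal.ofReal (∫ a, ψ a ∂(inverseTilt P ψ)) *
        EReal.exp (-(erealIntegral P fun a => ENNReal.log ((inverseTilt P ψ).rnDeriv P a)))
      = ENNReal.ofReal (exp (∫ a, log (ψ a) ∂P)) := by
  set Z := ∫ a, (ψ a)⁻¹ ∂P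
  have hZ : 0 < Z := integral_pos_of_ae_pos (ae_of_all _ fun a => inv_pos.2 (hψ a)) hinv
  have hd : ∀ a, 0 < (ψ a)⁻¹ / Z := fun a => div_pos (inv_pos.2 (hψ a)) hZ
  have hlogd : (fun a => log ((ψ a)⁻¹ / Z)) = fun a => -log (ψ a) - log Z := funext fun a => by
    rw [log_div (inv_pos.2 (hψ a)).ne' hZ.ne', log_inv]
  have hlogd_int : Integrable (fun a => log ((ψ a)⁻¹ / Z)) P := by
    rw [hlogd]
    exact hlogψ.neg.sub (integrable_const _)
  rw [integral_inverseTilt hψ hψm, inverseTilt,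
    erealIntegral_log_rnDeriv_withDensity_ofReal (by fun_prop) hd hlogd_int, hlogd,
    integral_sub hlogψ.fun_neg (integrable_const _), integral_neg, ← EReal.coe_neg, EReal.exp_coe,
    ← ENNReal.ofReal_mul (inv_pos.2 hZ).le]
  congr 1
  simp only [integral_const, probReal_univ, one_smul, neg_sub, sub_neg_eq_add, exp_add, exp_log hZ]
  field_simp

end minimizer

/-- dual representation of the logarithmic ambiguity function.
For a probability measure `P` and a bounded measurable `ψ` with `inf ψ > 0`,
`exp(∫ log ψ dP) = inf { (∫ ψ dQ)·exp(−∫ log(dQ/dP) dP) : Q probability, Q ≪ P }`,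
where `log(dQ/dP)` takes values in `[−∞,∞)` and the penalty `exp(−∫ log(dQ/dP) dP)` is
read in `ℝ≥0∞`.  The infimum is attained at `dQ* = ψ⁻¹ dP / ∫ ψ⁻¹ dP`. -/
theorem stmt_10
    {S : Type*} [MeasurableSpace S] (P : Measure S) [IsProbabilityMeasure P]
    (ψ : S → ℝ) (hψmeas : Measurable ψ) (hψbdd : ∃ M, ∀ θ, |ψ θ| ≤ M)
    (c : ℝ) (hc : 0 < c) (hcψ : ∀ θ, c ≤ ψ θ) :
    (ENNReal.ofReal (exp (∫ θ, log (ψ θ) ∂P))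
        = ⨅ Q : {Q : Measure S // IsProbabilityMeasure Q ∧ Q ≪ P},
            (ENNReal.ofReal (∫ θ, ψ θ ∂(Q : Measure S)) *
              EReal.exp
                (-(erealIntegral P fun θ => ENNReal.log ((Q : Measure S).rnDeriv P θ))))) ∧
      IsProbabilityMeasure
        (P.withDensity fun θ => ENNReal.ofReal ((ψ θ)⁻¹ / ∫ θ', (ψ θ')⁻¹ ∂P)) ∧
      (P.withDensity fun θ => ENNReal.ofReal ((ψ θ)⁻¹ / ∫ θ', (ψ θ')⁻¹ ∂P)) ≪ P ∧
      ENNReal.ofReal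
            (∫ θ, ψ θ ∂(P.withDensity fun θ =>
              ENNReal.ofReal ((ψ θ)⁻¹ / ∫ θ', (ψ θ')⁻¹ ∂P))) *
          EReal.exp
            (-(erealIntegral P fun θ =>
              ENNReal.log ((P.withDensity fun θ =>
                ENNReal.ofReal ((ψ θ)⁻¹ / ∫ θ', (ψ θ')⁻¹ ∂P)).rnDeriv P θ)))
        = ENNReal.ofReal (exp (∫ θ, log (ψ θ) ∂P)) := by
  obtain ⟨M, hM⟩ := hψbdd
  have hψ : ∀ θ, 0 < ψ θ := fun θ => hc.trans_le (hcψ θ)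
  have hψ_int (Q : Measure S) [IsFiniteMeasure Q] : Integrable ψ Q :=
    .of_bound hψmeas.aestronglyMeasurable M (ae_of_all _ hM)
  have hinv : Integrable (fun θ => (ψ θ)⁻¹) P :=
    .of_bound hψmeas.inv.aestronglyMeasurable c⁻¹ (ae_of_all _ fun θ => by
      rw [norm_inv, Real.norm_of_nonneg (hψ θ).le]
      exact inv_anti₀ hc (hcψ θ))
  have hlogψ : Integrable (fun θ => log (ψ θ)) P :=
    .of_bound hψmeas.log.aestronglyMeasurable (max |log c| |log M|) (ae_of_all _ fun θ =>
      abs_le_max_abs_abs (log_le_log hc (hcψ θ))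
        (log_le_log (hψ θ) ((le_abs_self _).trans (hM θ))))
  have hQ := isProbabilityMeasure_inverseTilt hψ hinv
  have hQP : inverseTilt P ψ ≪ P := withDensity_absolutelyContinuous _ _
  have hval := ofReal_integral_mul_exp_inverseTilt hψ hψmeas hinv hlogψ
  refine ⟨le_antisymm ?_ (iInf_le_of_le ⟨_, hQ, hQP⟩ hval.le), hQ, hQP, hval⟩
  exact le_iInf fun ⟨Q, _, hQP⟩ => ofReal_exp_integral_log_le hQP hψ (hψ_int Q) hlogψ
end

section
/- Let T > 0, σ > 0, θ_min ≤ θ_max, and let W be a centered real Gaussian random variable with variance T. For θ ∈ ℝ set D^θ := exp( (θ/σ) W − θ²T/(2σ²) ). Then for any h > 0 and any θ₁, θ₂ ∈ [θ_min, θ_max] with |θ₁ − θ₂| ≤ h, E[ (D^{θ₁} − D^{θ₂})² ] ≤ (2hT/σ²) · max_{θ ∈ [θ_min, θ_max]} |θ| e^{θ²T/σ²}; in particular, sup{ E[(D^{θ₁}−D^{θ₂})²] : θ₁,θ₂ ∈ [θ_min,θ_max], |θ₁−θ₂| ≤ h } = O(h) as h → 0. -/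
/-!
The Gaussian moment generating function `E[exp (t W)] = exp (T t² / 2)` gives
`E[D^a D^b] = exp (a b T / σ²)`, hence, with `c = T / σ²`,
`E[(D^{θ₁} - D^{θ₂})²] = (e^{c θ₁²} - e^{c θ₁ θ₂}) + (e^{c θ₂²} - e^{c θ₁ θ₂})`.
By convexity, `e^x - e^y ≤ e^x (x - y)`, so the first bracket is at most
`c |θ₁ - θ₂| · |θ₁| e^{c θ₁²}`, and symmetrically for the second.
-/

open MeasureTheory ProbabilityTheory Real Set
open scoped NNReal

/-- The paper's `D^θ` is `girsanovDensity T (θ / σ) W`. -/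
noncomputable def girsanovDensity (v s x : ℝ) : ℝ := exp (s * x - v * s ^ 2 / 2)

lemma girsanovDensity_mul_girsanovDensity (v s r x : ℝ) :
    girsanovDensity v s x * girsanovDensity v r x
      = exp (-(v * s ^ 2 / 2 + v * r ^ 2 / 2)) * exp ((s + r) * x) := by
  rw [girsanovDensity, girsanovDensity, ← exp_add, ← exp_add]
  ring_nf

section GaussianMoments

variable {Ω : Type*} [MeasurableSpace Ω] {P : Measure Ω} {W : Ω → ℝ} {v : ℝ≥0}

lemma integral_exp_mul_of_map_eq_gaussianReal (hW : P.map W = gaussianReal 0 v) (t : ℝ) :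
    ∫ ω, exp (t * W ω) ∂P = exp (v * t ^ 2 / 2) := by
  simpa [mgf] using mgf_gaussianReal hW t

lemma integrable_exp_mul_of_map_eq_gaussianReal (hW : P.map W = gaussianReal 0 v) (t : ℝ) :
    Integrable (fun ω ↦ exp (t * W ω)) P := by
  have : NeZero P := ⟨by rintro rfl; exact IsProbabilityMeasure.ne_zero _ (by simpa using hW.symm)⟩
  rw [← mgf_pos_iff, mgf_gaussianReal hW]
  exact exp_pos _

lemma integrable_girsanovDensity_mul_girsanovDensity (hW : P.map W = gaussianReal 0 v)
    (s r : ℝ) :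
    Integrable (fun ω ↦ girsanovDensity v s (W ω) * girsanovDensity v r (W ω)) P := by
  simp_rw [girsanovDensity_mul_girsanovDensity]
  exact (integrable_exp_mul_of_map_eq_gaussianReal hW _).const_mul _

lemma integral_girsanovDensity_mul_girsanovDensity (hW : P.map W = gaussianReal 0 v)
    (s r : ℝ) :
    ∫ ω, girsanovDensity v s (W ω) * girsanovDensity v r (W ω) ∂P = exp (v * s * r) := by
  simp_rw [girsanovDensity_mul_girsanovDensity]
  rw [integral_const_mul, integral_exp_mul_of_map_eq_gaussianReal hW, ← exp_add]
  ring_nf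

lemma integral_sq_girsanovDensity_sub_girsanovDensity (hW : P.map W = gaussianReal 0 v)
    (s r : ℝ) :
    ∫ ω, (girsanovDensity v s (W ω) - girsanovDensity v r (W ω)) ^ 2 ∂P
      = exp (v * s * s) - 2 * exp (v * s * r) + exp (v * r * r) := by
  set D : ℝ → Ω → ℝ := fun s ω ↦ girsanovDensity v s (W ω)
  have hint (s r : ℝ) : Integrable (fun ω ↦ D s ω * D r ω) P :=
    integrable_girsanovDensity_mul_girsanovDensity hW s r
  calc ∫ ω, (D s ω - D r ω) ^ 2 ∂P
      = ∫ ω, (D s ω * D s ω - 2 * (D s ω * D r ω) + D r ω * D r ω) ∂P := by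
        congr with ω; ring
    _ = _ := by
      rw [integral_add, integral_sub, integral_const_mul]
      · simp only [D, integral_girsanovDensity_mul_girsanovDensity hW]
      exacts [hint s s, (hint s r).const_mul 2, (hint s s).sub ((hint s r).const_mul 2), hint r r]

end GaussianMoments

lemma exp_sub_exp_le_exp_mul_sub (x y : ℝ) : exp x - exp y ≤ exp x * (x - y) :=
  calc exp x - exp y = exp x * (1 - exp (y - x)) := by rw [exp_sub]; field_simp
    _ ≤ exp x * (x - y) :=
      mul_le_mul_of_nonneg_left (by linarith [add_one_le_exp (y - x)]) (exp_pos x).le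

lemma exp_mul_mul_sub_exp_mul_mul_le {a b c : ℝ} (hc : 0 ≤ c) :
    exp (c * a * a) - exp (c * a * b) ≤ c * |a - b| * (|a| * exp (c * a * a)) :=
  calc exp (c * a * a) - exp (c * a * b) ≤ exp (c * a * a) * (c * (a * (a - b))) := by
        convert exp_sub_exp_le_exp_mul_sub _ _ using 2; ring
    _ ≤ exp (c * a * a) * (c * (|a| * |a - b|)) := by
        gcongr exp (c * a * a) * (c * ?_)
        exact (le_abs_self _).trans (abs_mul _ _).le
    _ = c * |a - b| * (|a| * exp (c * a * a)) := by ring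

lemma exp_mul_sq_sub_two_exp_mul_add_exp_mul_sq_le {a b c M : ℝ} (hc : 0 ≤ c)
    (ha : |a| * exp (c * a * a) ≤ M) (hb : |b| * exp (c * b * b) ≤ M) :
    exp (c * a * a) - 2 * exp (c * a * b) + exp (c * b * b) ≤ 2 * c * |a - b| * M := by
  have hab := exp_mul_mul_sub_exp_mul_mul_le (a := a) (b := b) hc
  have hba := exp_mul_mul_sub_exp_mul_mul_le (a := b) (b := a) hc
  rw [abs_sub_comm, mul_right_comm c b a] at hba
  have := mul_le_mul_of_nonneg_left ha (by positivity : 0 ≤ c * |a - b|)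
  have := mul_le_mul_of_nonneg_left hb (by positivity : 0 ≤ c * |a - b|)
  linarith

theorem stmt_12_general
    {Ω : Type*} [MeasurableSpace Ω] (P : Measure Ω)
    (T σ θmin θmax : ℝ) (hT : 0 < T)
    (W : Ω → ℝ)
    (hlaw : Measure.map W P = gaussianReal 0 ⟨T, hT.le⟩)
    (D : ℝ → Ω → ℝ)
    (hD : ∀ θ ω, D θ ω = exp ((θ / σ) * W ω - θ ^ 2 * T / (2 * σ ^ 2))) :
    (∀ h > (0:ℝ), ∀ θ₁ ∈ Icc θmin θmax, ∀ θ₂ ∈ Icc θmin θmax, |θ₁ - θ₂| ≤ h →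
      ∫ ω, (D θ₁ ω - D θ₂ ω) ^ 2 ∂P
        ≤ (2 * h * T / σ ^ 2) *
            sSup ((fun θ => |θ| * exp (θ ^ 2 * T / σ ^ 2)) '' Icc θmin θmax)) ∧
    ∃ K : ℝ, ∀ h > (0:ℝ), ∀ θ₁ ∈ Icc θmin θmax, ∀ θ₂ ∈ Icc θmin θmax, |θ₁ - θ₂| ≤ h →
      ∫ ω, (D θ₁ ω - D θ₂ ω) ^ 2 ∂P ≤ K * h := by
  set f : ℝ → ℝ := fun θ => |θ| * exp (θ ^ 2 * T / σ ^ 2)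
  set M := sSup (f '' Icc θmin θmax)
  have hfM : ∀ θ ∈ Icc θmin θmax, |θ| * exp (T / σ ^ 2 * θ * θ) ≤ M := fun θ hθ ↦
    calc |θ| * exp (T / σ ^ 2 * θ * θ) = f θ := by simp only [f]; ring_nf
      _ ≤ M := le_csSup ((isCompact_Icc.image (by fun_prop)).bddAbove) (mem_image_of_mem f hθ)
  set v : ℝ≥0 := ⟨T, hT.le⟩
  have hvT : (v : ℝ) = T := rfl
  have hD' : ∀ θ ω, D θ ω = girsanovDensity v (θ / σ) (W ω) := fun θ ω ↦ by
    rw [hD, girsanovDensity, hvT]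
    ring_nf
  have main : ∀ h > (0:ℝ), ∀ θ₁ ∈ Icc θmin θmax, ∀ θ₂ ∈ Icc θmin θmax, |θ₁ - θ₂| ≤ h →
      ∫ ω, (D θ₁ ω - D θ₂ ω) ^ 2 ∂P ≤ (2 * h * T / σ ^ 2) * M := by
    intro h _ θ₁ h₁ θ₂ h₂ hθ
    have hM : 0 ≤ M := (by positivity : 0 ≤ |θ₁| * exp (T / σ ^ 2 * θ₁ * θ₁)).trans (hfM θ₁ h₁)
    simp only [hD']
    rw [integral_sq_girsanovDensity_sub_girsanovDensity hlaw]
    calc _ = exp (T / σ ^ 2 * θ₁ * θ₁) - 2 * exp (T / σ ^ 2 * θ₁ * θ₂)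
          + exp (T / σ ^ 2 * θ₂ * θ₂) := by rw [hvT]; ring_nf
      _ ≤ 2 * (T / σ ^ 2) * |θ₁ - θ₂| * M :=
        exp_mul_sq_sub_two_exp_mul_add_exp_mul_sq_le (by positivity) (hfM θ₁ h₁) (hfM θ₂ h₂)
      _ ≤ 2 * (T / σ ^ 2) * h * M := by gcongr
      _ = 2 * h * T / σ ^ 2 * M := by ring
  exact ⟨main, 2 * T / σ ^ 2 * M, fun h hh θ₁ h₁ θ₂ h₂ hθ ↦
    (main h hh θ₁ h₁ θ₂ h₂ hθ).trans_eq (by ring)⟩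

/-- For `W ~ N(0,T)` and the densities
`D^θ = exp((θ/σ) W − θ²T/(2σ²))`, for scenarios `θ₁, θ₂ ∈ [θ_min, θ_max]` at distance at most
`h` one has `E[(D^{θ₁} − D^{θ₂})²] ≤ (2hT/σ²) · max_{θ∈[θ_min,θ_max]} |θ| e^{θ²T/σ²}`;
in particular the supremum over such pairs is `O(h)` as `h → 0`. -/
theorem stmt_12
    {Ω : Type*} [MeasurableSpace Ω] (P : Measure Ω) [IsProbabilityMeasure P]
    (T σ θmin θmax : ℝ) (hT : 0 < T) (hσ : 0 < σ) (hθ : θmin ≤ θmax)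
    (W : Ω → ℝ) (hWmeas : Measurable W)
    (hlaw : Measure.map W P = gaussianReal 0 ⟨T, hT.le⟩)
    (D : ℝ → Ω → ℝ)
    (hD : ∀ θ ω, D θ ω = exp ((θ / σ) * W ω - θ ^ 2 * T / (2 * σ ^ 2))) :
    (∀ h > (0:ℝ), ∀ θ₁ ∈ Icc θmin θmax, ∀ θ₂ ∈ Icc θmin θmax, |θ₁ - θ₂| ≤ h →
      ∫ ω, (D θ₁ ω - D θ₂ ω) ^ 2 ∂P
        ≤ (2 * h * T / σ ^ 2) *
            sSup ((fun θ => |θ| * exp (θ ^ 2 * T / σ ^ 2)) '' Icc θmin θmax)) ∧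
    ∃ K : ℝ, ∀ h > (0:ℝ), ∀ θ₁ ∈ Icc θmin θmax, ∀ θ₂ ∈ Icc θmin θmax, |θ₁ - θ₂| ≤ h →
      ∫ ω, (D θ₁ ω - D θ₂ ω) ^ 2 ∂P ≤ K * h :=
  stmt_12_general P T σ θmin θmax hT W hlaw D hD
end
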